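/- arXiv:2105.07550 — 4 statements merged into one kernel-verified Lean document; each statement's English description precedes it below -/
import Mathlib

section
/- Let i ≥ 1 and let N_i denote the number of monic irreducible polynomials of degree i over F_q. If m ≥ i·N_i + w and a_1, ..., a_w ∈ F_q are fixed, then the number of monic polynomials of degree m over F_q of the form x^m + a_1 x^{m-1} + ... + a_w x^{m-w} + g(x), with deg g ≤ m−w−1, that have exactly r distinct irreducible factors of degree i, equals q^{m-w} · C(N_i, r) · (1/q^i)^r · (1 − 1/q^i)^{N_i − r}. -/
/-!
Put `n = m - w`. The admissible `g` are exactly `monicHead m a + c` with `deg c < n`, and `h ∣ g`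
iff `g` vanishes in `F[X]/(h)`. The irreducibles of degree `i` have total degree `i N_i ≤ n`, so
by the Chinese remainder theorem the additive map `c ↦ (c mod h)_h` from polynomials of degree
`< n` to `∏_h F[X]/(h)` is onto, and all of its fibres have `q^n / q^(i N_i)` elements. Hence the
count is `q^(n - i N_i)` times the number of points of `∏_h F[X]/(h)`, a product of `N_i` sets of
size `q^i`, with exactly `r` zero coordinates, which is `C(N_i, r) (q^i - 1)^(N_i - r)`.
-/

open Polynomial Finset Function

section ZeroCount

variable {ι : Type*} [Fintype ι] [DecidableEq ι] {Q : ι → Type*} [∀ j, Fintype (Q j)]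
  [∀ j, DecidableEq (Q j)] [∀ j, Zero (Q j)] {N : ℕ}

theorem card_filter_zeroSet_eq (hQ : ∀ j, Nat.card (Q j) = N) (S : Finset ι) :
    #{f : ∀ j, Q j | ({j | f j = 0} : Finset ι) = S} = (N - 1) ^ (Fintype.card ι - #S) := by
  have hpi : ({f : ∀ j, Q j | ({j | f j = 0} : Finset ι) = S} : Finset _) =
      Fintype.piFinset fun j => if j ∈ S then {0} else {0}ᶜ := by
    ext f
    simp only [mem_filter, mem_univ, true_and, Fintype.mem_piFinset, Finset.ext_iff]
    refine forall_congr' fun j => ?_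
    split_ifs with hj <;> simp [hj]
  have hcard (j : ι) :
      #(if j ∈ S then {0} else {0}ᶜ : Finset (Q j)) = if j ∈ S then 1 else N - 1 := by
    split_ifs <;> simp [card_compl, ← hQ j, Nat.card_eq_fintype_card]
  simp only [hpi, Fintype.card_piFinset, hcard, prod_ite, prod_const_one, one_mul, prod_const,
    filter_not, card_sdiff, filter_mem_eq_inter, univ_inter, inter_univ, card_univ]

theorem card_filter_card_zeroSet_eq (hQ : ∀ j, Nat.card (Q j) = N) (r : ℕ) :
    #{f : ∀ j, Q j | #{j | f j = 0} = r} =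
      (Fintype.card ι).choose r * (N - 1) ^ (Fintype.card ι - r) := by
  have hmem (f : ∀ j, Q j) :
      #{j | f j = 0} = r ↔ ({j | f j = 0} : Finset ι) ∈ powersetCard r univ := by
    simp
  simp_rw [hmem, ← sum_card_fiberwise_eq_card_filter]
  rw [sum_congr rfl fun S hS => by rw [card_filter_zeroSet_eq hQ, (mem_powersetCard.mp hS).2],
    sum_const, card_powersetCard, card_univ, smul_eq_mul]

end ZeroCount

namespace AddMonoidHom

variable {G M : Type*} [AddGroup G] [Fintype G] [AddGroup M] [DecidableEq M]

theorem card_filter_eq_mul_natCard (f : G →+ M) (hf : Surjective f) (y : M) :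
    #{g | f g = y} * Nat.card M = Nat.card G := by
  have : Fintype M := Fintype.ofSurjective f hf
  have hfib (y' : M) : #{g | f g = y'} = #{g | f g = y} :=
    card_fiber_eq_of_mem_range f (hf y') (hf y)
  rw [Nat.card_eq_fintype_card, Nat.card_eq_fintype_card, ← card_univ, ← card_univ, mul_comm,
    ← smul_eq_mul, ← sum_const, ← sum_congr rfl fun y' _ => hfib y',
    sum_card_fiberwise_eq_card_filter]
  simp

theorem card_filter_add_mem_mul_natCard (f : G →+ M) (hf : Surjective f) (b : M)
    (S : Finset M) : #{g | b + f g ∈ S} * Nat.card M = #S * Nat.card G := by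
  rw [← sum_card_fiberwise_eq_card_filter, sum_mul, ← smul_eq_mul, ← sum_const]
  refine sum_congr rfl fun y _ => ?_
  simp_rw [← eq_neg_add_iff_add_eq]
  exact card_filter_eq_mul_natCard f hf _

end AddMonoidHom

namespace Polynomial

section CommRing

variable {R : Type*} [CommRing R]

theorem natCard_degreeLT (n : ℕ) : Nat.card (degreeLT R n) = Nat.card R ^ n := by
  rw [Nat.card_congr (degreeLTEquiv R n).toEquiv, Nat.card_fun, Nat.card_fin]

theorem Monic.natCard_adjoinRoot {g : R[X]} (hg : g.Monic) :
    Nat.card (AdjoinRoot g) = Nat.card R ^ g.natDegree := by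
  rw [Nat.card_congr (AdjoinRoot.powerBasis' hg).basis.equivFun.toEquiv, Nat.card_fun,
    Nat.card_fin, AdjoinRoot.powerBasis'_dim]

instance finite_degreeLT [Finite R] (n : ℕ) : Finite (degreeLT R n) :=
  .of_equiv _ (degreeLTEquiv R n).toEquiv.symm

instance finite_monic_natDegree_eq [Finite R] [Nontrivial R] (n : ℕ) :
    Finite {p : R[X] // p.Monic ∧ p.natDegree = n} :=
  .of_equiv _ (monicEquivDegreeLT n).symm

theorem surjective_degreeLT_pi_adjoinRoot_mk [Nontrivial R] {ι : Type*} [Fintype ι]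
    {p : ι → R[X]} (hmonic : ∀ j, (p j).Monic) (hcop : Pairwise (IsCoprime on p)) {n : ℕ}
    (hn : ∑ j, (p j).natDegree ≤ n) :
    Surjective fun (c : degreeLT R n) j => AdjoinRoot.mk (p j) c := by
  intro y
  obtain ⟨c, hc⟩ := Ideal.pi_quotient_surjective
    (fun j k hjk => (Ideal.isCoprime_span_singleton_iff _ _).mpr (hcop hjk)) y
  have hP : (∏ j, p j).Monic := monic_prod_of_monic _ _ fun j _ => hmonic j
  refine ⟨⟨c %ₘ ∏ j, p j, mem_degreeLT.mpr ?_⟩, ?_⟩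
  · calc (c %ₘ ∏ j, p j).degree < (∏ j, p j).degree := degree_modByMonic_lt _ hP
      _ ≤ n := by
        rw [degree_eq_natDegree hP.ne_zero, natDegree_prod_of_monic _ _ fun j _ => hmonic j]
        exact_mod_cast hn
  · ext j
    dsimp only
    rw [modByMonic_eq_sub_mul_div, map_sub, map_mul,
      AdjoinRoot.mk_eq_zero.mpr (dvd_prod_of_mem p (mem_univ j)), zero_mul, sub_zero]
    exact hc j

end CommRing

theorem isCoprime_of_monic_of_irreducible {K : Type*} [Field K] {p q : K[X]}
    (hp : p.Monic) (hq : q.Monic) (hpi : Irreducible p) (hqi : Irreducible q) (hpq : p ≠ q) :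
    IsCoprime p q :=
  hpi.coprime_iff_not_dvd.mpr fun hdvd =>
    hpq (eq_of_monic_of_associated hp hq (hpi.associated_of_dvd hqi hdvd))

section MonicHead

variable {R : Type*} [Ring R]

noncomputable def monicHead (m : ℕ) {w : ℕ} (a : Fin w → R) : R[X] :=
  X ^ m + ∑ k : Fin w, C (a k) * X ^ (m - (k + 1))

variable {m w : ℕ} (a : Fin w → R)

theorem coeff_monicHead_of_lt {j : ℕ} (hj : m < j) : (monicHead m a).coeff j = 0 := by
  refine coeff_eq_zero_of_natDegree_lt (lt_of_le_of_lt ?_ hj)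
  refine natDegree_add_le_of_degree_le (natDegree_X_pow_le m)
    (natDegree_sum_le_of_forall_le _ _ fun k _ => ?_)
  exact (natDegree_C_mul_X_pow_le _ _).trans (Nat.sub_le _ _)

theorem coeff_monicHead_self (hw : w ≤ m) : (monicHead m a).coeff m = 1 := by
  simp only [monicHead, coeff_add, coeff_X_pow_self, finsetSum_coeff, coeff_C_mul_X_pow]
  rw [sum_eq_zero fun k _ => if_neg (by omega), add_zero]

theorem coeff_monicHead_sub_succ (hw : w ≤ m) (k : Fin w) :
    (monicHead m a).coeff (m - (k + 1)) = a k := by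
  simp only [monicHead, coeff_add, coeff_X_pow, finsetSum_coeff, coeff_C_mul_X_pow]
  rw [if_neg (by omega), zero_add, sum_eq_single k (fun k' _ hk' => if_neg ?_) (by simp),
    if_pos rfl]
  have := k'.isLt
  omega

theorem monic_natDegree_coeff_iff_sub_mem_degreeLT [Nontrivial R] (hw : w ≤ m) (g : R[X]) :
    (g.Monic ∧ g.natDegree = m ∧ ∀ k : Fin w, g.coeff (m - (k + 1)) = a k) ↔
      g - monicHead m a ∈ degreeLT R (m - w) := by
  simp only [mem_degreeLT, degree_lt_iff_coeff_zero, coeff_sub, sub_eq_zero]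
  constructor
  · rintro ⟨hmonic, rfl, hcoeff⟩ j hj
    rcases lt_trichotomy j g.natDegree with hlt | rfl | hgt
    · obtain ⟨k, rfl⟩ : ∃ k : Fin w, j = g.natDegree - (k + 1) :=
        ⟨⟨g.natDegree - 1 - j, by omega⟩, by simp only; omega⟩
      rw [hcoeff, coeff_monicHead_sub_succ a hw]
    · rw [hmonic.coeff_natDegree, coeff_monicHead_self a hw]
    · rw [coeff_eq_zero_of_natDegree_lt hgt, coeff_monicHead_of_lt a hgt]
  · intro h
    have hm : g.coeff m = 1 := by rw [h m (by omega), coeff_monicHead_self a hw]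
    have hle : g.natDegree ≤ m := natDegree_le_iff_coeff_eq_zero.mpr fun j hj => by
      rw [h j (by omega), coeff_monicHead_of_lt a (by exact_mod_cast hj)]
    refine ⟨monic_of_natDegree_le_of_coeff_eq_one m hle hm,
      le_antisymm hle (le_natDegree_of_ne_zero (by simp [hm])), fun k => ?_⟩
    rw [h _ (by omega), coeff_monicHead_sub_succ a hw]

theorem natCard_monic_natDegree_coeff_and [Nontrivial R] (hw : w ≤ m) (P : R[X] → Prop) :
    Nat.card {g : R[X] // g.Monic ∧ g.natDegree = m ∧
        (∀ k : Fin w, g.coeff (m - (k + 1)) = a k) ∧ P g} =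
      Nat.card {c : degreeLT R (m - w) // P (monicHead m a + c)} := by
  refine Nat.card_congr
    { toFun := fun g => ⟨⟨g.1 - monicHead m a,
          (monic_natDegree_coeff_iff_sub_mem_degreeLT a hw g.1).mp
            ⟨g.2.1, g.2.2.1, g.2.2.2.1⟩⟩,
        by simpa using g.2.2.2.2⟩
      invFun := fun c => ⟨monicHead m a + c, by
        have := (monic_natDegree_coeff_iff_sub_mem_degreeLT a hw (monicHead m a + c)).mpr (by simp)
        exact ⟨this.1, this.2.1, this.2.2, c.2⟩⟩
      left_inv := fun g => by simp
      right_inv := fun c => by simp }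

end MonicHead

theorem natCard_monic_natDegree_coeff_card_dvd_mul {K ι : Type*} [Field K] [Fintype K]
    [Fintype ι] {p : ι → K[X]} (hmonic : ∀ j, (p j).Monic) (hcop : Pairwise (IsCoprime on p))
    {d : ℕ} (hdeg : ∀ j, (p j).natDegree = d) {m w : ℕ} (hm : d * Fintype.card ι + w ≤ m)
    (a : Fin w → K) (r : ℕ) :
    Nat.card {g : K[X] // g.Monic ∧ g.natDegree = m ∧
        (∀ k : Fin w, g.coeff (m - (k + 1)) = a k) ∧ Nat.card {j // p j ∣ g} = r} *
        (Fintype.card K ^ d) ^ Fintype.card ι =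
      (Fintype.card ι).choose r * (Fintype.card K ^ d - 1) ^ (Fintype.card ι - r) *
        Fintype.card K ^ (m - w) := by
  classical
  have (j : ι) : Fintype (AdjoinRoot (p j)) :=
    have := (hmonic j).finite_adjoinRoot
    have := Module.finite_of_finite K (M := AdjoinRoot (p j))
    .ofFinite _
  have : Fintype (degreeLT K (m - w)) := .ofFinite _
  have hQ (j : ι) : Nat.card (AdjoinRoot (p j)) = Fintype.card K ^ d := by
    rw [(hmonic j).natCard_adjoinRoot, hdeg, Nat.card_eq_fintype_card]
  let ψ : K[X] →+* ∀ j, AdjoinRoot (p j) := RingHom.pi fun j => AdjoinRoot.mk (p j)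
  let φ := ψ.toAddMonoidHom.comp (degreeLT K (m - w)).subtype.toAddMonoidHom
  have hφ : Surjective φ := surjective_degreeLT_pi_adjoinRoot_mk hmonic hcop (by
    rw [sum_congr rfl fun j _ => hdeg j, sum_const, card_univ, smul_eq_mul, mul_comm]
    omega)
  have hφψ (c : degreeLT K (m - w)) : ψ (monicHead m a) + φ c = ψ (monicHead m a + c) :=
    (map_add ψ _ _).symm
  have hdvd (g : K[X]) : Nat.card {j // p j ∣ g} = #{j | ψ g j = 0} := by
    rw [← Fintype.card_subtype, ← Nat.card_eq_fintype_card]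
    exact Nat.card_congr (Equiv.subtypeEquivRight fun j => AdjoinRoot.mk_eq_zero.symm)
  have key := φ.card_filter_add_mem_mul_natCard hφ (ψ (monicHead m a)) {y | #{j | y j = 0} = r}
  rw [card_filter_card_zeroSet_eq hQ, Nat.card_pi, natCard_degreeLT] at key
  simp only [hQ, prod_const, card_univ, mem_filter, mem_univ, true_and, hφψ,
    Nat.card_eq_fintype_card] at key
  rw [natCard_monic_natDegree_coeff_and a (by omega), Nat.card_eq_fintype_card,
    Fintype.card_subtype]
  simpa only [hdvd] using key

end Polynomial

theorem cast_eq_mul_choose_mul_pow_of_mul_pow_eq {K : Type*} [Field K] [CharZero K]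
    {c x M N r : ℕ} (hx : 1 ≤ x) (h : c * x ^ N = N.choose r * (x - 1) ^ (N - r) * M) :
    (c : K) = M * N.choose r * (1 / (x : K)) ^ r * (1 - 1 / (x : K)) ^ (N - r) := by
  rcases le_or_gt r N with hr | hr
  · obtain ⟨s, rfl⟩ := Nat.exists_eq_add_of_le hr
    have hcast := congrArg (Nat.cast : ℕ → K) h
    push_cast [Nat.cast_sub hx, Nat.add_sub_cancel_left] at hcast ⊢
    have hx0 : (x : K) ≠ 0 := Nat.cast_ne_zero.mpr (by omega)
    rw [one_sub_div hx0, div_pow, div_pow, one_pow]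
    field_simp
    linear_combination hcast
  · have hc : c = 0 := by
      simpa [Nat.choose_eq_zero_of_lt hr, Nat.one_le_iff_ne_zero.mp hx] using h
    simp [hc, Nat.choose_eq_zero_of_lt hr]

theorem stmt_10_general (q : ℕ) (F : Type*) [Field F] [Fintype F] (hF : Fintype.card F = q)
    (i : ℕ) (Ni : ℕ)
    (hNi : Ni = Nat.card {h : Polynomial F // h.Monic ∧ Irreducible h ∧ h.natDegree = i})
    (w m r : ℕ) (hm : i * Ni + w ≤ m) (a : Fin w → F) :
    (Nat.card {g : Polynomial F // g.Monic ∧ g.natDegree = m ∧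
        (∀ k : Fin w, g.coeff (m - (k + 1)) = a k) ∧
        Nat.card {h : Polynomial F // h.Monic ∧ Irreducible h ∧ h.natDegree = i ∧ h ∣ g} = r}
      : ℚ) =
      (q : ℚ) ^ (m - w) * (Ni.choose r) * (1 / (q : ℚ) ^ i) ^ r *
        (1 - 1 / (q : ℚ) ^ i) ^ (Ni - r) := by
  set ι := {h : F[X] // h.Monic ∧ Irreducible h ∧ h.natDegree = i}
  have : Finite ι := .of_injective _ (Subtype.impEmbedding _
    (fun p : F[X] => p.Monic ∧ p.natDegree = i) fun _ hh => ⟨hh.1, hh.2.2⟩).injective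
  have : Fintype ι := .ofFinite ι
  have hι : Fintype.card ι = Ni := by rw [hNi, Nat.card_eq_fintype_card]
  have hcount := natCard_monic_natDegree_coeff_card_dvd_mul (p := fun h : ι => h.1)
    (fun h => h.2.1) (fun h h' hne => isCoprime_of_monic_of_irreducible h.2.1 h'.2.1 h.2.2.1
      h'.2.2.1 (Subtype.coe_injective.ne hne)) (fun h => h.2.2.2) (m := m) (by rwa [hι]) a r
  have hdvd (g : F[X]) :
      Nat.card {h : F[X] // h.Monic ∧ Irreducible h ∧ h.natDegree = i ∧ h ∣ g} =
        Nat.card {h : ι // h.1 ∣ g} :=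
    Nat.card_congr ((Equiv.subtypeSubtypeEquivSubtypeInter _ (· ∣ g)).trans
      (Equiv.subtypeEquivRight fun h => by simp only [and_assoc])).symm
  simp only [hdvd]
  rw [hι, hF] at hcount
  simpa using cast_eq_mul_choose_mul_pow_of_mul_pow_eq (K := ℚ)
    (Nat.one_le_pow _ _ (hF ▸ Fintype.card_pos)) hcount

/-- If `m ≥ i·N_i + w`, the number of monic polynomials
`x^m + a_1 x^(m-1) + ... + a_w x^(m-w) + g(x)` (with `deg g ≤ m-w-1`) that have exactly `r`
distinct monic irreducible factors of degree `i` equals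
`q^(m-w) · C(N_i, r) · (1/q^i)^r · (1 − 1/q^i)^(N_i − r)`. -/
theorem stmt_10 (q : ℕ) (F : Type*) [Field F] [Fintype F] (hF : Fintype.card F = q)
    (i : ℕ) (hi : 1 ≤ i) (Ni : ℕ)
    (hNi : Ni = Nat.card {h : Polynomial F // h.Monic ∧ Irreducible h ∧ h.natDegree = i})
    (w m r : ℕ) (hm : i * Ni + w ≤ m) (a : Fin w → F) :
    (Nat.card {g : Polynomial F // g.Monic ∧ g.natDegree = m ∧
        (∀ k : Fin w, g.coeff (m - (k + 1)) = a k) ∧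
        Nat.card {h : Polynomial F // h.Monic ∧ Irreducible h ∧ h.natDegree = i ∧ h ∣ g} = r}
      : ℚ) =
      (q : ℚ) ^ (m - w) * (Ni.choose r) * (1 / (q : ℚ) ^ i) ^ r *
        (1 - 1 / (q : ℚ) ^ i) ^ (Ni - r) :=
  stmt_10_general q F hF i Ni hNi w m r hm a
end

section
/- If m ≥ q + l, the number of monic polynomials of degree m over F_q with exactly l linear factors counted with multiplicity (i.e., l roots in F_q with multiplicity) equals q^{m−l} · C(q + l − 1, l) · (1 − 1/q)^q. -/
/-!
A monic `g` of degree `m` with `l` roots counted with multiplicity factors uniquely as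
`∏_{a ∈ s} (X - a) * h` with `s` a multiset of `l` field elements, of which there are
`C(q + l - 1, l)`, and `h` monic of degree `m - l` without roots. Whether `h` has a root only
depends on its remainder modulo `∏_{a ∈ F_q} (X - a)`, which has degree `q`; for `deg h ≥ q`,
division with remainder identifies `h` with a pair consisting of a remainder of degree `< q`
vanishing nowhere (`(q - 1)^q` of them, by Lagrange interpolation) and a monic quotient of
degree `m - l - q` (`q^(m - l - q)` of them).
-/

open Polynomial

namespace Polynomial

section CommRing

variable {R : Type*} [CommRing R] [Nontrivial R]

theorem card_monic_natDegree_eq (n : ℕ) :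
    Nat.card {p : R[X] // p.Monic ∧ p.natDegree = n} = Nat.card R ^ n := by
  rw [Nat.card_congr ((monicEquivDegreeLT n).trans (degreeLTEquiv R n).toEquiv), Nat.card_fun,
    Nat.card_fin]

theorem monic_mul_add_of_degree_lt {P t r : R[X]} (hP : P.Monic) (ht : t.Monic)
    (hr : r.degree < P.natDegree) :
    (P * t + r).Monic ∧ (P * t + r).natDegree = P.natDegree + t.natDegree := by
  have hPt : (P * t).natDegree = P.natDegree + t.natDegree := hP.natDegree_mul ht
  have hlt : r.degree < (P * t).degree := by
    rw [degree_eq_natDegree (hP.mul ht).ne_zero, hPt]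
    exact hr.trans_le (by exact_mod_cast Nat.le_add_right _ _)
  exact ⟨(hP.mul ht).add_of_left hlt, by rw [natDegree_add_eq_left_of_degree_lt hlt, hPt]⟩

noncomputable def monicDivModByMonicEquiv {P : R[X]} (hP : P.Monic) {n : ℕ}
    (hn : P.natDegree ≤ n) :
    {g : R[X] // g.Monic ∧ g.natDegree = n} ≃
      degreeLT R P.natDegree × {t : R[X] // t.Monic ∧ t.natDegree = n - P.natDegree} where
  toFun g :=
    (⟨g.1 %ₘ P, mem_degreeLT.2 (degree_eq_natDegree hP.ne_zero ▸ degree_modByMonic_lt g.1 hP)⟩,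
      ⟨g.1 /ₘ P, by
        have hle : P.degree ≤ g.1.degree := by
          rw [degree_eq_natDegree hP.ne_zero, degree_eq_natDegree g.2.1.ne_zero, g.2.2]
          exact_mod_cast hn
        rw [Monic, leadingCoeff_divByMonic_of_monic hP hle, g.2.1],
        by rw [natDegree_divByMonic g.1 hP, g.2.2]⟩)
  invFun x := ⟨P * x.2.1 + x.1.1, by
    obtain ⟨hmonic, hdeg⟩ := monic_mul_add_of_degree_lt hP x.2.2.1 (mem_degreeLT.1 x.1.2)
    exact ⟨hmonic, by rw [hdeg, x.2.2.2]; omega⟩⟩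
  left_inv g := Subtype.ext (by simpa [add_comm] using modByMonic_add_div g.1 P)
  right_inv x := by
    obtain ⟨hdiv, hmod⟩ := div_modByMonic_unique (f := P * x.2.1 + x.1.1) x.2.1 x.1.1 hP
      ⟨add_comm _ _, degree_eq_natDegree hP.ne_zero ▸ mem_degreeLT.1 x.1.2⟩
    ext <;> simp [hdiv, hmod]

end CommRing

section FiniteField

variable {F : Type*} [Field F] [Fintype F]

theorem card_degreeLT_forall_eval_ne_zero :
    Nat.card {r : degreeLT F (Fintype.card F) // ∀ a, (r : F[X]).eval a ≠ 0} =
      (Fintype.card F - 1) ^ Fintype.card F := by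
  classical
  have e : {r : degreeLT F (Finset.univ : Finset F).card // ∀ a, (r : F[X]).eval a ≠ 0} ≃
      (↥(Finset.univ : Finset F) → {x : F // x ≠ 0}) :=
    (Equiv.subtypeEquiv (Lagrange.funEquivDegreeLT (Set.injOn_id _)).toEquiv
      fun _ => ⟨fun h ⟨i, _⟩ => h i, fun h a => h ⟨a, Finset.mem_univ a⟩⟩).trans
      Equiv.subtypePiEquivPi
  have hunits : Nat.card {x : F // x ≠ 0} = Fintype.card F - 1 := by
    rw [Nat.card_eq_fintype_card, Fintype.card_subtype_compl, Fintype.card_subtype_eq]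
  simpa [Nat.card_fun, hunits] using Nat.card_congr e

theorem card_monic_roots_eq_zero {n : ℕ} (hn : Fintype.card F ≤ n) :
    Nat.card {g : F[X] // g.Monic ∧ g.natDegree = n ∧ g.roots = 0} =
      (Fintype.card F - 1) ^ Fintype.card F * Fintype.card F ^ (n - Fintype.card F) := by
  set P : F[X] := Lagrange.nodal Finset.univ id
  have hP : P.Monic := Lagrange.nodal_monic
  have hPdeg : P.natDegree = Fintype.card F := by
    rw [Lagrange.natDegree_nodal, Finset.card_univ]
  have hroots (g : F[X]) (hg : g.Monic) : g.roots = 0 ↔ ∀ a, (g %ₘ P).eval a ≠ 0 := by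
    have hPa (a : F) : aeval a P = 0 := by
      simpa using Lagrange.eval_nodal_at_node (v := id) (Finset.mem_univ a)
    simp only [Multiset.eq_zero_iff_forall_notMem, mem_roots hg.ne_zero, IsRoot.def,
      ← coe_aeval_eq_eval, aeval_modByMonic_eq_self_of_root (hPa _)]
  let e := ((Equiv.subtypeSubtypeEquivSubtypeInter _ (fun g : F[X] => g.roots = 0)).symm.trans
      (Equiv.subtypeEquiv (q := fun x => ∀ a, (x.1 : F[X]).eval a ≠ 0)
        (monicDivModByMonicEquiv hP (hPdeg ▸ hn))
        fun g => hroots g.1 g.2.1)).trans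
      (Equiv.prodSubtypeFstEquivSubtypeProd
        (p := fun r : degreeLT F P.natDegree => ∀ a, (r : F[X]).eval a ≠ 0))
  rw [Nat.card_congr ((Equiv.subtypeEquivRight fun _ => and_assoc).symm.trans e), Nat.card_prod,
    hPdeg, card_degreeLT_forall_eval_ne_zero, card_monic_natDegree_eq, Nat.card_eq_fintype_card]

end FiniteField

section IsDomain

variable {R : Type*} [CommRing R] [IsDomain R]

theorem sum_rootMultiplicity_eq_card_roots [Fintype R] (g : R[X]) :
    ∑ a : R, g.rootMultiplicity a = Multiset.card g.roots := by
  classical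
  simp_rw [← count_roots]
  exact Multiset.sum_count_eq_card fun a _ => Finset.mem_univ a

theorem roots_multiset_prod_X_sub_C_mul (s : Multiset R) {h : R[X]} (hh : h ≠ 0) :
    ((s.map fun a => X - C a).prod * h).roots = s + h.roots := by
  rw [roots_mul (mul_ne_zero (monic_multiset_prod_of_monic _ _ fun a _ => monic_X_sub_C a).ne_zero
    hh), roots_multiset_prod_X_sub_C]

theorem card_monic_card_roots_eq {m l : ℕ} (hl : l ≤ m) :
    Nat.card {g : R[X] // g.Monic ∧ g.natDegree = m ∧ Multiset.card g.roots = l} =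
      Nat.card (Sym R l) * Nat.card {h : R[X] // h.Monic ∧ h.natDegree = m - l ∧ h.roots = 0} := by
  let D (s : Multiset R) : R[X] := (s.map fun a => X - C a).prod
  have hD (s : Multiset R) : (D s).Monic :=
    monic_multiset_prod_of_monic _ _ fun a _ => monic_X_sub_C a
  have hroots (s : Multiset R) {h : R[X]} (hh : h.Monic) (h0 : h.roots = 0) :
      (D s * h).roots = s := by
    rw [roots_multiset_prod_X_sub_C_mul s hh.ne_zero, h0, add_zero]
  let f (x : Sym R l × {h : R[X] // h.Monic ∧ h.natDegree = m - l ∧ h.roots = 0}) :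
      {g : R[X] // g.Monic ∧ g.natDegree = m ∧ Multiset.card g.roots = l} :=
    ⟨D x.1 * x.2.1, (hD x.1).mul x.2.2.1, by
      rw [(hD x.1).natDegree_mul x.2.2.1, natDegree_multiset_prod_X_sub_C_eq_card, Sym.card_coe,
        x.2.2.2.1]
      omega, by rw [hroots x.1 x.2.2.1 x.2.2.2.2, Sym.card_coe]⟩
  have hinj : f.Injective := by
    rintro ⟨s, h, hh⟩ ⟨s', h', hh'⟩ heq
    have hDh : D s * h = D s' * h' := congrArg Subtype.val heq
    have hs : s = s' := Sym.coe_injective (by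
      rw [← hroots s hh.1 hh.2.2, ← hroots s' hh'.1 hh'.2.2, hDh])
    subst hs
    have hh : h = h' := mul_left_cancel₀ (hD s).ne_zero hDh
    subst hh
    rfl
  have hsurj : f.Surjective := by
    rintro ⟨g, hg, hdeg, hcard⟩
    obtain ⟨h, hgh, hdeg', h0⟩ := exists_prod_multiset_X_sub_C_mul g
    have hh : h.Monic := (hD g.roots).of_mul_monic_left (by rwa [← hgh] at hg)
    exact ⟨(⟨g.roots, hcard⟩, ⟨h, hh, by omega, h0⟩), Subtype.ext hgh⟩
  rw [← Nat.card_prod]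
  exact Nat.card_congr (Equiv.ofBijective f ⟨hinj, hsurj⟩).symm

end IsDomain

end Polynomial

/-- If `m ≥ q + l`, the number of monic polynomials of degree `m` over `F_q` with exactly `l`
linear factors counted with multiplicity (i.e. `l` roots in `F_q` with multiplicity) equals
`q^(m−l) · C(q + l − 1, l) · (1 − 1/q)^q`. -/
theorem stmt_13 (q : ℕ) (F : Type*) [Field F] [Fintype F] (hF : Fintype.card F = q)
    (m l : ℕ) (hm : q + l ≤ m) :
    (Nat.card {g : Polynomial F // g.Monic ∧ g.natDegree = m ∧
        (∑ α : F, g.rootMultiplicity α) = l} : ℚ) =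
      (q : ℚ) ^ (m - l) * ((q + l - 1).choose l) * (1 - 1 / (q : ℚ)) ^ q := by
  classical
  subst hF
  have hq : 0 < Fintype.card F := Fintype.card_pos
  simp_rw [sum_rootMultiplicity_eq_card_roots]
  rw [card_monic_card_roots_eq (by omega), card_monic_roots_eq_zero (by omega),
    Nat.card_eq_fintype_card, Sym.card_sym_eq_choose]
  set q := Fintype.card F
  have hq0 : (q : ℚ) ≠ 0 := by positivity
  rw [show m - l = (m - l - q) + q by omega, Nat.add_sub_cancel, pow_add, one_sub_div hq0,
    div_pow]
  push_cast [Nat.cast_sub (by omega : 1 ≤ q)]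
  field_simp
end

section
/- In the formal power series ring Z[[z]], one has the identity ∏_{i≥1} (1 − z^i)^{−N_i} = Σ_{k≥0} q^k z^k, where N_i is the number of monic irreducible polynomials of degree i over F_q. -/
/-!
Expanding `(1 - z^d)⁻¹ = ∑ₖ z^(d k)`, the coefficient of `z^m` in the product of
`(1 - z^(deg p))⁻¹` over the monic irreducible `p` of degree at most `M` counts the exponent
vectors `(k_p)` with `∑ k_p deg p = m`. Since `m ≤ M`, unique factorization in `F[X]` matches
these with the monic polynomials `∏ p ^ k_p` of degree `m`, of which there are `q ^ m`.
-/

open Polynomial PowerSeries Finset UniqueFactorizationMonoid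

namespace PowerSeries

theorem ring_inverse_one_sub_X_pow {R : Type*} [CommRing R] {d : ℕ} (hd : d ≠ 0) :
    Ring.inverse (1 - X ^ d : R⟦X⟧) = mk fun n => if d ∣ n then 1 else 0 := by
  have hmul : (1 - X ^ d : R⟦X⟧) * expand d hd (mk 1) = 1 := by
    rw [← expand_X d hd, ← map_one (expand d hd), ← map_sub, ← map_mul, mul_comm,
      mk_one_mul_one_sub_eq_one, map_one]
  have hexpand : (mk fun n => if d ∣ n then 1 else 0 : R⟦X⟧) = expand d hd (mk 1) := by
    ext n
    rw [coeff_expand, coeff_mk, coeff_mk, Pi.one_apply]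
  rw [hexpand, ← mul_one (Ring.inverse _),
    Ring.inverse_mul_eq_iff_eq_mul _ _ _ (.of_mul_eq_one _ hmul), hmul]

theorem coeff_prod_ring_inverse_one_sub_X_pow {ι R : Type*} [CommRing R] [DecidableEq ι]
    {s : Finset ι} {d : ι → ℕ} (hd : ∀ i ∈ s, d i ≠ 0) (m : ℕ) :
    coeff m (∏ i ∈ s, Ring.inverse (1 - X ^ d i : R⟦X⟧)) =
      #{l ∈ s.finsuppAntidiag m | ∀ i ∈ s, d i ∣ l i} := by
  rw [prod_congr rfl fun i hi => ring_inverse_one_sub_X_pow (hd i hi), coeff_prod]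
  simp only [coeff_mk, prod_boole, sum_boole]

end PowerSeries

namespace Polynomial

theorem finite_setOf_natDegree_le (R : Type*) [CommRing R] [Finite R] (n : ℕ) :
    {p : R[X] | p.natDegree ≤ n}.Finite := by
  have : Finite (degreeLT R (n + 1)) := .of_equiv _ (degreeLTEquiv R (n + 1)).toEquiv.symm
  refine (Set.toFinite (degreeLT R (n + 1) : Set R[X])).subset fun p hp => ?_
  rw [SetLike.mem_coe, mem_degreeLT]
  exact degree_le_natDegree.trans_lt (by exact_mod_cast Nat.lt_succ_of_le hp)

noncomputable def monicIrreducibleNatDegreeLE (R : Type*) [CommRing R] [Finite R] (n : ℕ) :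
    Finset R[X] :=
  ((finite_setOf_natDegree_le R n).subset fun _ hp => hp.2.2 :
    {p : R[X] | p.Monic ∧ Irreducible p ∧ p.natDegree ≤ n}.Finite).toFinset

theorem mem_monicIrreducibleNatDegreeLE {R : Type*} [CommRing R] [Finite R] {n : ℕ} {p : R[X]} :
    p ∈ monicIrreducibleNatDegreeLE R n ↔ p.Monic ∧ Irreducible p ∧ p.natDegree ≤ n :=
  Set.Finite.mem_toFinset _

theorem card_filter_monicIrreducibleNatDegreeLE {R : Type*} [CommRing R] [Finite R] {i n : ℕ}
    (hi : i ≤ n) :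
    #{p ∈ monicIrreducibleNatDegreeLE R n | p.natDegree = i} =
      Nat.card {p : R[X] // p.Monic ∧ Irreducible p ∧ p.natDegree = i} := by
  rw [← Nat.card_eq_finsetCard]
  refine Nat.card_congr (Equiv.subtypeEquivRight fun p => ?_)
  rw [mem_filter, mem_monicIrreducibleNatDegreeLE]
  exact ⟨fun ⟨⟨hp, hirr, _⟩, hpi⟩ => ⟨hp, hirr, hpi⟩,
    fun ⟨hp, hirr, hpi⟩ => ⟨⟨hp, hirr, hpi ▸ hi⟩, hpi⟩⟩

theorem card_monic_natDegree_eq_pow (R : Type*) [CommRing R] [Nontrivial R] (n : ℕ) :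
    Nat.card {p : R[X] // p.Monic ∧ p.natDegree = n} = Nat.card R ^ n := by
  rw [Nat.card_congr ((monicEquivDegreeLT n).trans (degreeLTEquiv R n).toEquiv), Nat.card_fun,
    Nat.card_fin]

theorem natDegree_prod_pow_of_monic {R ι : Type*} [CommSemiring R] [Nontrivial R] {s : Finset ι}
    {f : ι → R[X]} (hf : ∀ i ∈ s, (f i).Monic) (e : ι → ℕ) :
    (∏ i ∈ s, f i ^ e i).natDegree = ∑ i ∈ s, e i * (f i).natDegree := by
  rw [natDegree_prod_of_monic _ _ fun i hi => (hf i hi).pow _]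
  exact sum_congr rfl fun i hi => (hf i hi).natDegree_pow _

variable {F : Type*} [Field F] [DecidableEq F]

theorem count_normalizedFactors_prod_pow {T : Finset F[X]}
    (hT : ∀ p ∈ T, p.Monic ∧ Irreducible p) (e : F[X] → ℕ) {p : F[X]} (hp : p ∈ T) :
    (normalizedFactors (∏ q ∈ T, q ^ e q)).count p = e p := by
  have hprod : ∏ q ∈ T, q ^ e q = (∑ q ∈ T, e q • {q} : Multiset F[X]).prod := by
    simp [Multiset.prod_sum, Multiset.prod_nsmul]
  have hfactors : normalizedFactors (∏ q ∈ T, q ^ e q) = ∑ q ∈ T, e q • {q} := by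
    have hmem : ∀ a ∈ (∑ q ∈ T, e q • {q} : Multiset F[X]), a ∈ T := by
      intro a ha
      obtain ⟨q, hq, ha⟩ := Multiset.mem_sum.1 ha
      rwa [Multiset.mem_singleton.1 (Multiset.mem_of_mem_nsmul ha)]
    rw [hprod, normalizedFactors_prod_eq _ fun a ha => (hT a (hmem a ha)).2]
    exact (Multiset.map_congr rfl fun a ha => (hT a (hmem a ha)).1.normalize_eq_self).trans
      (Multiset.map_id _)
  simp [hfactors, Multiset.count_sum', Multiset.count_singleton, hp]

theorem Monic.prod_pow_count_normalizedFactors {T : Finset F[X]} {f : F[X]} (hf : f.Monic)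
    (hT : (normalizedFactors f).toFinset ⊆ T) :
    ∏ p ∈ T, p ^ (normalizedFactors f).count p = f := by
  rw [← prod_multiset_count_of_subset _ _ hT, prod_normalizedFactors_eq hf.ne_zero,
    hf.normalize_eq_self]

theorem eq_of_prod_pow_eq {T : Finset F[X]} (hT : ∀ p ∈ T, p.Monic ∧ Irreducible p)
    {e e' : F[X] → ℕ} (h : ∏ p ∈ T, p ^ e p = ∏ p ∈ T, p ^ e' p) {p : F[X]} (hp : p ∈ T) :
    e p = e' p := by
  rw [← count_normalizedFactors_prod_pow hT e hp, h, count_normalizedFactors_prod_pow hT e' hp]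

section FinsuppAntidiag

/- An element `l` of `{l ∈ T.finsuppAntidiag m | ∀ p ∈ T, p.natDegree ∣ l p}` encodes the
exponents `k_p = l p / deg p` of a product `∏ p ^ k_p` of degree `m`. -/

variable {T : Finset F[X]} {m : ℕ}

theorem natDegree_prod_pow_div_natDegree (hT : ∀ p ∈ T, p.Monic) {l : F[X] →₀ ℕ}
    (hl : l ∈ {l ∈ T.finsuppAntidiag m | ∀ p ∈ T, p.natDegree ∣ l p}) :
    (∏ p ∈ T, p ^ (l p / p.natDegree)).natDegree = m := by
  simp only [mem_filter, mem_finsuppAntidiag] at hl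
  rw [natDegree_prod_pow_of_monic hT, ← hl.1.1]
  exact sum_congr rfl fun p hp => Nat.div_mul_cancel (hl.2 p hp)

theorem Monic.exists_prod_pow_div_natDegree_eq (hT : ∀ p ∈ T, p.Monic ∧ Irreducible p)
    (hcover : ∀ p : F[X], p.Monic → Irreducible p → p.natDegree ≤ m → p ∈ T)
    {f : F[X]} (hf : f.Monic) (hfm : f.natDegree = m) :
    ∃ l ∈ {l ∈ T.finsuppAntidiag m | ∀ p ∈ T, p.natDegree ∣ l p},
      ∏ p ∈ T, p ^ (l p / p.natDegree) = f := by
  have hsub : (normalizedFactors f).toFinset ⊆ T := fun p hp => by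
    rw [Multiset.mem_toFinset, Polynomial.mem_normalizedFactors_iff hf.ne_zero] at hp
    exact hcover p hp.2.1 hp.1 (hfm ▸ natDegree_le_of_dvd hp.2.2 hf.ne_zero)
  let l : F[X] →₀ ℕ := Finsupp.onFinset T (fun p => (normalizedFactors f).count p * p.natDegree)
    fun p hp => hsub (Multiset.mem_toFinset.2 (Multiset.count_ne_zero.1 (left_ne_zero_of_mul hp)))
  have hl : ∀ p ∈ T, l p / p.natDegree = (normalizedFactors f).count p := fun p hp =>
    Nat.mul_div_cancel _ (hT p hp).2.natDegree_pos
  refine ⟨l, ?_, ?_⟩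
  · simp only [mem_filter, mem_finsuppAntidiag]
    refine ⟨⟨?_, Finsupp.support_onFinset_subset⟩, fun p _ => dvd_mul_left _ _⟩
    rw [← hfm, ← hf.prod_pow_count_normalizedFactors hsub,
      natDegree_prod_pow_of_monic fun p hp => (hT p hp).1]
    rfl
  · rw [prod_congr rfl fun p hp => by rw [hl p hp], hf.prod_pow_count_normalizedFactors hsub]

theorem card_monic_natDegree_eq_card_finsuppAntidiag (hT : ∀ p ∈ T, p.Monic ∧ Irreducible p)
    (hcover : ∀ p : F[X], p.Monic → Irreducible p → p.natDegree ≤ m → p ∈ T) :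
    Nat.card {f : F[X] // f.Monic ∧ f.natDegree = m} =
      #{l ∈ T.finsuppAntidiag m | ∀ p ∈ T, p.natDegree ∣ l p} := by
  have hmonic : ∀ p ∈ T, p.Monic := fun p hp => (hT p hp).1
  rw [← Nat.card_eq_finsetCard]
  refine (Nat.card_eq_of_bijective (fun l => ⟨∏ p ∈ T, p ^ (l.1 p / p.natDegree),
    monic_prod_of_monic _ _ fun p hp => (hmonic p hp).pow _,
    natDegree_prod_pow_div_natDegree hmonic l.2⟩) ⟨?_, ?_⟩).symm
  · rintro ⟨l, hl⟩ ⟨l', hl'⟩ h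
    simp only [mem_filter, mem_finsuppAntidiag] at hl hl'
    refine Subtype.ext (Finsupp.ext fun p => ?_)
    by_cases hp : p ∈ T
    · rw [← Nat.div_mul_cancel (hl.2 p hp), ← Nat.div_mul_cancel (hl'.2 p hp),
        eq_of_prod_pow_eq hT (congr_arg Subtype.val h) hp]
    · rw [Finsupp.notMem_support_iff.1 fun h => hp (hl.1.2 h),
        Finsupp.notMem_support_iff.1 fun h => hp (hl'.1.2 h)]
  · rintro ⟨f, hf, hfm⟩
    obtain ⟨l, hl, hlf⟩ := hf.exists_prod_pow_div_natDegree_eq hT hcover hfm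
    exact ⟨⟨l, hl⟩, Subtype.ext hlf⟩

end FinsuppAntidiag

end Polynomial

/-- The infinite product converges coefficientwise, since the factors with `i > m` do not affect
the coefficient of `z^m`; the identity is therefore stated for the partial products up to any
`M ≥ m`. -/
theorem stmt_16 (q : ℕ) (F : Type*) [Field F] [Fintype F] (hF : Fintype.card F = q)
    (N : ℕ → ℕ)
    (hN : ∀ i, N i = Nat.card {h : Polynomial F // h.Monic ∧ Irreducible h ∧ h.natDegree = i})
    (m M : ℕ) (hM : m ≤ M) :
    PowerSeries.coeff (R := ℤ) m
        (∏ i ∈ Finset.Icc 1 M,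
          (Ring.inverse (1 - (PowerSeries.X : PowerSeries ℤ) ^ i)) ^ N i) =
      (q : ℤ) ^ m := by
  classical
  set T := monicIrreducibleNatDegreeLE F M
  have hT : ∀ p ∈ T, p.Monic ∧ Irreducible p ∧ p.natDegree ≤ M := fun _ hp =>
    mem_monicIrreducibleNatDegreeLE.1 hp
  have hprod : ∏ i ∈ Icc 1 M, Ring.inverse (1 - PowerSeries.X ^ i : ℤ⟦X⟧) ^ N i =
      ∏ p ∈ T, Ring.inverse (1 - PowerSeries.X ^ p.natDegree : ℤ⟦X⟧) := by
    rw [← prod_fiberwise_of_maps_to' (g := natDegree) (t := Icc 1 M)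
      (fun p hp => mem_Icc.2 ⟨(hT p hp).2.1.natDegree_pos, (hT p hp).2.2⟩)
      fun i => Ring.inverse (1 - PowerSeries.X ^ i : ℤ⟦X⟧)]
    refine prod_congr rfl fun i hi => ?_
    rw [prod_const, hN, card_filter_monicIrreducibleNatDegreeLE (mem_Icc.1 hi).2]
  rw [hprod, coeff_prod_ring_inverse_one_sub_X_pow fun p hp => (hT p hp).2.1.natDegree_pos.ne',
    ← card_monic_natDegree_eq_card_finsuppAntidiag (fun p hp => ⟨(hT p hp).1, (hT p hp).2.1⟩)
      fun p hp hirr hpm => mem_monicIrreducibleNatDegreeLE.2 ⟨hp, hirr, hpm.trans hM⟩,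
    card_monic_natDegree_eq_pow, Nat.card_eq_fintype_card, hF]
  exact Nat.cast_pow q m
end

section
/- Let q = p^e, p prime, and for each α ∈ F_q let g_α(y) = 1 + (1 + αx)y, an element of R[[y]] where R = F_q[x]/(x²) is encoded via the group algebra C[G] with G = {⟨x+α⟩ : α ∈ F_q}, ⟨x+α⟩⟨x+β⟩ = ⟨x+α+β⟩. With E = (1/q) Σ_{α} ⟨x+α⟩ and J = 1 − E, one has in C[G][[y]]: J · ∏_{α ∈ F_q} (1 + ⟨x+α⟩ y) = J · (1 − (−y)^p)^{q/p}. -/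
/-!
Every complex character `ψ` of `G ≅ (F_q, +)` extends to an algebra map `ℂ[G] → ℂ`, and these maps
jointly separate the points of `ℂ[G]` because the characters span all functions `G → ℂ`. Applied
coefficientwise, it suffices to compare both sides after applying each `ψ`. The element `E`
goes to `1` under the trivial character and to `0` under all others, so `J` kills the trivial
character and becomes `1` otherwise. A nontrivial `ψ` maps `F_q` onto the `p`-th roots of unity
with fibres of size `q / p`, so the product becomes
`(∏_{ζ^p = 1} (1 + ζ y))^(q/p) = (1 - (-y)^p)^(q/p)`.
-/

open PowerSeries Finset

theorem PowerSeries.eq_of_forall_map_eq {ι R S : Type*} [Semiring R] [Semiring S]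
    {φ : ι → R →+* S} (hφ : Function.Injective fun x i ↦ φ i x) {f g : R⟦X⟧}
    (h : ∀ i, map (φ i) f = map (φ i) g) : f = g :=
  ext fun n ↦ hφ <| funext fun i ↦ by simpa using congr_arg (coeff n) (h i)

namespace AddChar

section GroupAlgebra

variable {A R : Type*} [AddMonoid A] [CommSemiring R]

noncomputable def toAlgHom (ψ : AddChar A R) : MonoidAlgebra R (Multiplicative A) →ₐ[R] R :=
  MonoidAlgebra.lift R R (Multiplicative A) ψ.toMonoidHom

@[simp]
theorem toAlgHom_of (ψ : AddChar A R) (a : A) :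
    ψ.toAlgHom (MonoidAlgebra.of R _ (Multiplicative.ofAdd a)) = ψ a :=
  MonoidAlgebra.lift_of _ _

theorem toAlgHom_apply [Fintype A] (ψ : AddChar A R) (x : MonoidAlgebra R (Multiplicative A)) :
    ψ.toAlgHom x = ∑ a, x.coeff (Multiplicative.ofAdd a) * ψ a := by
  rw [toAlgHom, MonoidAlgebra.lift_apply, Finsupp.sum_fintype _ _ fun _ ↦ by simp]
  exact Fintype.sum_equiv Multiplicative.toAdd _ _ fun _ ↦ rfl

end GroupAlgebra

theorem injective_toAlgHom_pi {A : Type*} [AddCommGroup A] [Finite A] :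
    Function.Injective fun (x : MonoidAlgebra ℂ (Multiplicative A)) (ψ : AddChar A ℂ) ↦
      ψ.toAlgHom x := by
  cases nonempty_fintype A
  classical
  let T : MonoidAlgebra ℂ (Multiplicative A) →ₗ[ℂ] AddChar A ℂ → ℂ :=
    LinearMap.pi fun ψ ↦ ψ.toAlgHom.toLinearMap
  refine (injective_iff_map_eq_zero T).2 fun x hx ↦ ?_
  -- `ℓ f = ∑ₐ x(a) f(a)` vanishes on every character, hence on their span, which is everything.
  let ℓ : (A → ℂ) →ₗ[ℂ] ℂ := ∑ a, x.coeff (Multiplicative.ofAdd a) • LinearMap.proj a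
  have hℓ : ℓ = 0 := (complexBasis A).ext fun ψ ↦ by
    simpa [ℓ, T, toAlgHom_apply] using congrFun hx ψ
  ext g
  simpa [ℓ, Pi.single_apply] using LinearMap.congr_fun hℓ (Pi.single g.toAdd 1)

theorem isPrimitiveRoot_apply {A M : Type*} [AddMonoid A] [CommMonoid M] {p : ℕ}
    {ψ : AddChar A M} (hp : p.Prime) (hA : ∀ a : A, p • a = 0) {a : A} (ha : ψ a ≠ 1) :
    IsPrimitiveRoot (ψ a) p := by
  have : Fact p.Prime := ⟨hp⟩
  have h := orderOf_eq_prime (by rw [← map_nsmul_eq_pow, hA, map_zero_eq_one]) ha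
  exact h ▸ IsPrimitiveRoot.orderOf _

theorem card_fiber_eq_of_mem_range {A M : Type*} [AddGroup A] [Fintype A] [Monoid M]
    [DecidableEq M] (ψ : AddChar A M) {x y : M}
    (hx : x ∈ Set.range ψ) (hy : y ∈ Set.range ψ) : #{a | ψ a = x} = #{a | ψ a = y} :=
  letI : Fintype (Multiplicative A) := ‹Fintype A›
  MonoidHom.card_fiber_eq_of_mem_range ψ.toMonoidHom hx hy

section RootsOfUnity

variable {A S : Type*} [AddGroup A] [Fintype A] [CommRing S] [IsDomain S] {p : ℕ}
  {ψ : AddChar A S}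

theorem image_eq_nthRootsFinset [DecidableEq S] (hp : p.Prime) (hA : ∀ a : A, p • a = 0)
    (hψ : ψ ≠ 0) : univ.image ψ = Polynomial.nthRootsFinset p (1 : S) := by
  obtain ⟨a, ha⟩ := ne_one_iff.1 hψ
  have : NeZero p := ⟨hp.ne_zero⟩
  ext ξ
  simp only [mem_image, mem_univ, true_and, Polynomial.mem_nthRootsFinset hp.pos]
  constructor
  · rintro ⟨b, rfl⟩
    rw [← map_nsmul_eq_pow, hA, map_zero_eq_one]
  · intro hξ
    obtain ⟨i, -, rfl⟩ := (isPrimitiveRoot_apply hp hA ha).eq_pow_of_pow_eq_one hξ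
    exact ⟨i • a, map_nsmul_eq_pow ψ i a⟩

theorem card_fiber_eq_card_div [DecidableEq S] (hp : p.Prime) (hA : ∀ a : A, p • a = 0)
    (hψ : ψ ≠ 0) {ξ : S} (hξ : ξ ∈ Set.range ψ) : #{a | ψ a = ξ} = Fintype.card A / p := by
  obtain ⟨a, ha⟩ := ne_one_iff.1 hψ
  have hcard := card_eq_sum_card_image ψ univ
  rw [sum_congr rfl fun η hη ↦ card_fiber_eq_of_mem_range ψ (by simpa using hη) hξ, sum_const,
    image_eq_nthRootsFinset hp hA hψ, (isPrimitiveRoot_apply hp hA ha).card_nthRootsFinset,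
    smul_eq_mul, card_univ] at hcard
  rw [hcard, Nat.mul_div_cancel_left _ hp.pos]

theorem prod_sub_mul_eq_pow_sub_pow_pow (hp : p.Prime) (hA : ∀ a : A, p • a = 0) (hψ : ψ ≠ 0)
    (x y : S) : ∏ a, (x - ψ a * y) = (x ^ p - y ^ p) ^ (Fintype.card A / p) := by
  classical
  obtain ⟨a, ha⟩ := ne_one_iff.1 hψ
  rw [prod_comp (fun ξ ↦ x - ξ * y) ψ, prod_congr rfl fun ξ hξ ↦ by
      rw [card_fiber_eq_card_div hp hA hψ (by simpa using hξ)],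
    prod_pow, image_eq_nthRootsFinset hp hA hψ,
    (isPrimitiveRoot_apply hp hA ha).pow_sub_pow_eq_prod_sub_mul x y hp.pos]

theorem prod_one_add_C_mul_X (hp : p.Prime) (hA : ∀ a : A, p • a = 0) (hψ : ψ ≠ 0) :
    ∏ a, (1 + C (ψ a) * X : S⟦X⟧) = (1 - (-X) ^ p) ^ (Fintype.card A / p) := by
  obtain ⟨a, ha⟩ := ne_one_iff.1 hψ
  have hCψ : (C : S →+* S⟦X⟧).toMonoidHom.compAddChar ψ ≠ 0 :=
    ne_one_iff.2 ⟨a, fun h ↦ ha (C_injective (h.trans (map_one C).symm))⟩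
  rw [← one_pow p, ← prod_sub_mul_eq_pow_sub_pow_pow hp hA hCψ]
  simp

end RootsOfUnity

end AddChar

theorem stmt_19_general (p q : ℕ) (hp : p.Prime)
    (F : Type*) [Field F] [Fintype F] [CharP F p] (hF : Fintype.card F = q)
    (E J : MonoidAlgebra ℂ (Multiplicative F))
    (hE : E = (q : ℂ)⁻¹ • ∑ α : F, MonoidAlgebra.of ℂ (Multiplicative F) (Multiplicative.ofAdd α))
    (hJ : J = 1 - E) :
    PowerSeries.C J *
        ∏ α : F, (1 + PowerSeries.C
            (MonoidAlgebra.of ℂ (Multiplicative F) (Multiplicative.ofAdd α)) * PowerSeries.X) =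
      PowerSeries.C J *
        (1 - (-PowerSeries.X) ^ p) ^ (q / p) := by
  have hpF : ∀ a : F, p • a = 0 := fun a ↦ by rw [nsmul_eq_mul, CharP.cast_eq_zero, zero_mul]
  have hq : (q : ℂ) ≠ 0 := hF ▸ Nat.cast_ne_zero.2 Fintype.card_ne_zero
  refine PowerSeries.eq_of_forall_map_eq (φ := fun ψ : AddChar F ℂ ↦ (ψ.toAlgHom : _ →+* ℂ))
    AddChar.injective_toAlgHom_pi fun ψ ↦ ?_
  have hEψ : ψ.toAlgHom E = (q : ℂ)⁻¹ * ∑ a, ψ a := by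
    rw [hE, map_smul, map_sum, smul_eq_mul]
    simp only [AddChar.toAlgHom_of]
  simp only [map_mul, map_prod, map_add, map_one, map_sub, map_pow, map_neg, map_C, map_X,
    RingHom.coe_coe, AddChar.toAlgHom_of]
  by_cases hψ : ψ = 0
  · have hJψ : ψ.toAlgHom J = 0 := by
      rw [hJ, map_sub, map_one, hEψ, hψ]
      simp [hF, hq]
    simp [hJψ]
  · have hJψ : ψ.toAlgHom J = 1 := by
      rw [hJ, map_sub, map_one, hEψ, AddChar.sum_eq_zero_iff_ne_zero.2 hψ, mul_zero, sub_zero]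
    rw [hJψ, map_one, one_mul, one_mul, ← hF, AddChar.prod_one_add_C_mul_X hp hpF hψ]

/-- Let `G` be the group `{⟨x+α⟩ : α ∈ F_q}` (isomorphic to the additive group of `F_q`,
encoded as `Multiplicative F_q`), `ℂ[G]` its complex group algebra,
`E = (1/q) Σ_α ⟨x+α⟩` and `J = 1 − E`. Then in `ℂ[G][[y]]`:
`J · ∏_{α ∈ F_q} (1 + ⟨x+α⟩ y) = J · (1 − (−y)^p)^(q/p)`. -/
theorem stmt_19 (p e q : ℕ) (hp : p.Prime) (he : 0 < e) (hq : q = p ^ e)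
    (F : Type*) [Field F] [Fintype F] [CharP F p] (hF : Fintype.card F = q)
    (E J : MonoidAlgebra ℂ (Multiplicative F))
    (hE : E = (q : ℂ)⁻¹ • ∑ α : F, MonoidAlgebra.of ℂ (Multiplicative F) (Multiplicative.ofAdd α))
    (hJ : J = 1 - E) :
    PowerSeries.C J *
        ∏ α : F, (1 + PowerSeries.C
            (MonoidAlgebra.of ℂ (Multiplicative F) (Multiplicative.ofAdd α)) * PowerSeries.X) =
      PowerSeries.C J *
        (1 - (-PowerSeries.X) ^ p) ^ (q / p) :=
  stmt_19_general p q hp F hF E J hE hJ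
end
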